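/- Let 1/2 ≤ γ < 1 and fix δ ∈ (γ, 1) and a large integer K. The set E = {x ∈ (0,1] : ε_j(x) = 0 for all j with 2^k < j ≤ 2^k + ⌊2^{δk}⌋, for every k ≥ K} is contained in {x : lim_{n→∞} S_n(x)/2^{n^γ} = ∞} and has Hausdorff dimension 1. Consequently, for Ψ(n) = 2^{n^γ} with 1/2 ≤ γ < 1, the set E_Ψ(∞) has Hausdorff dimension 1. -/

import Mathlib

open Filter Set MeasureTheory
open scoped ENNReal Classical

/-- The doubling map on `(0,1]`. -/
noncomputable def T (x : ℝ) : ℝ := 2 * x - ⌈2 * x⌉ + 1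

/-- The Saint-Petersburg potential: `phi x = 2^k` for `x ∈ (2^{-k-1}, 2^{-k}]`. -/
noncomputable def phi (x : ℝ) : ℝ := 2 ^ ⌊Real.logb 2 x⁻¹⌋

/-- Birkhoff sums of the Saint-Petersburg potential under the doubling map. -/
noncomputable def S (n : ℕ) (x : ℝ) : ℝ := ∑ j ∈ Finset.range n, phi (T^[j] x)

/-- The `n`-th binary digit of `x` (for `n ≥ 1`): `eps n x = ⌈2 T^{n-1} x⌉ - 1`. -/
noncomputable def eps (n : ℕ) (x : ℝ) : ℤ := ⌈2 * T^[n-1] x⌉ - 1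



/-! ### Basic lemmas on `T` and `eps` -/

lemma T_mem_Ioc (x : ℝ) : T x ∈ Set.Ioc (0:ℝ) 1 := by
  constructor
  · have := Int.ceil_lt_add_one (2*x); simp only [T]; linarith
  · have := Int.le_ceil (2*x); simp only [T]; linarith

lemma T_iter_mem_Ioc {x : ℝ} (hx : x ∈ Set.Ioc (0:ℝ) 1) (n : ℕ) :
    T^[n] x ∈ Set.Ioc (0:ℝ) 1 := by
  cases n with
  | zero => simpa using hx
  | succ n => rw [Function.iterate_succ_apply']; exact T_mem_Ioc _

lemma eps_zero_or_one {x : ℝ} (hx : x ∈ Set.Ioc (0:ℝ) 1) (n : ℕ) :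
    eps (n+1) x = 0 ∨ eps (n+1) x = 1 := by
  have h := T_iter_mem_Ioc hx n
  have h1 : (0:ℝ) < 2 * T^[n] x := by linarith [h.1]
  have h2 : 2 * T^[n] x ≤ 2 := by linarith [h.2]
  have hc1 : 1 ≤ ⌈2 * T^[n] x⌉ := by exact_mod_cast Int.le_ceil_iff.mpr (by simpa using h1)
  have hc2 : ⌈2 * T^[n] x⌉ ≤ 2 := Int.ceil_le.mpr (by exact_mod_cast h2)
  simp only [eps, Nat.add_sub_cancel]
  omega

/-- Algebraic identity: `2 * y = (⌈2y⌉ - 1) + T y`. -/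
lemma two_mul_eq (y : ℝ) : 2 * y = ((⌈2*y⌉ : ℝ) - 1) + T y := by
  simp only [T]; ring

/-- Telescoping: `x = ∑_{j<n} eps (j+1) x / 2^{j+1} + 2^{-n} T^[n] x`. -/
lemma telescope (x : ℝ) (n : ℕ) :
    x = (∑ j ∈ Finset.range n, (eps (j+1) x : ℝ) * (2:ℝ)⁻¹ ^ (j+1)) + (2:ℝ)⁻¹ ^ n * T^[n] x := by
  induction n with
  | zero => simp
  | succ n ih =>
    rw [Finset.sum_range_succ, Function.iterate_succ_apply']
    have heps : (eps (n+1) x : ℝ) = (⌈2 * T^[n] x⌉ : ℝ) - 1 := by simp [eps]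
    have h2 : (2:ℝ)⁻¹ ^ (n+1) * T (T^[n] x)
        = (2:ℝ)⁻¹ ^ n * T^[n] x - (2:ℝ)⁻¹ ^ (n+1) * ((⌈2*T^[n] x⌉:ℝ) - 1) := by
      have hT : T (T^[n] x) = 2 * T^[n] x - ((⌈2*T^[n] x⌉:ℝ) - 1) := by
        simp only [T]; ring
      rw [hT]; ring
    rw [heps]; linarith [ih, h2]

noncomputable def D (n : ℕ) (x : ℝ) : ℝ :=
  ∑ j ∈ Finset.range n, (eps (j+1) x : ℝ) * (2:ℝ)⁻¹ ^ (j+1)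

lemma sub_D_mem {x : ℝ} (hx : x ∈ Set.Ioc (0:ℝ) 1) (n : ℕ) :
    x - D n x ∈ Set.Ioc (0:ℝ) ((2:ℝ)⁻¹ ^ n) := by
  have h := telescope x n
  have ht := T_iter_mem_Ioc hx n
  have hp : (0:ℝ) < (2:ℝ)⁻¹ ^ n := by positivity
  constructor
  · have : x - D n x = (2:ℝ)⁻¹ ^ n * T^[n] x := by rw [D]; linarith [h]
    rw [this]; exact mul_pos hp ht.1
  · have : x - D n x = (2:ℝ)⁻¹ ^ n * T^[n] x := by rw [D]; linarith [h]
    rw [this]; nlinarith [ht.2]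

lemma geom_tail (n : ℕ) : (∑ j ∈ Finset.range n, (2:ℝ)⁻¹ ^ (j+2)) = 1/2 * (1 - 2⁻¹^n) := by
  induction n with
  | zero => simp
  | succ n ih => rw [Finset.sum_range_succ, ih]; ring

/-- Uniqueness of binary representations with coefficients in {0,1}. -/
lemma binary_unique : ∀ (n : ℕ) (c d : ℕ → ℤ),
    (∀ j, c j = 0 ∨ c j = 1) → (∀ j, d j = 0 ∨ d j = 1) →
    (∑ j ∈ Finset.range n, (c j : ℝ) * (2:ℝ)⁻¹ ^ (j+1)) =
      (∑ j ∈ Finset.range n, (d j : ℝ) * (2:ℝ)⁻¹ ^ (j+1)) →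
    ∀ j < n, c j = d j := by
  intro n
  induction n with
  | zero => intro c d _ _ _ j hj; omega
  | succ n ih =>
    intro c d hc hd heq j hj
    have bound : ∀ (e : ℕ → ℤ), (∀ j, e j = 0 ∨ e j = 1) →
        (∑ j ∈ Finset.range n, (e (j+1) : ℝ) * (2:ℝ)⁻¹ ^ (j+2)) < 1/2 ∧
        0 ≤ (∑ j ∈ Finset.range n, (e (j+1) : ℝ) * (2:ℝ)⁻¹ ^ (j+2)) := by
      intro e he
      constructor
      · have h1 : (∑ j ∈ Finset.range n, (e (j+1) : ℝ) * (2:ℝ)⁻¹ ^ (j+2)) ≤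
            ∑ j ∈ Finset.range n, (2:ℝ)⁻¹ ^ (j+2) := by
          apply Finset.sum_le_sum
          intro i _
          have hw : (0:ℝ) ≤ (2:ℝ)⁻¹ ^ (i+2) := by positivity
          have : ((e (i+1) : ℝ)) ≤ 1 := by rcases he (i+1) with h|h <;> rw [h] <;> norm_num
          nlinarith
        rw [geom_tail] at h1
        have : (0:ℝ) < 2⁻¹^n := by positivity
        linarith
      · apply Finset.sum_nonneg
        intro i _
        have : (0:ℝ) ≤ ((e (i+1) : ℝ)) := by rcases he (i+1) with h|h <;> rw [h] <;> norm_num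
        positivity
    have split : ∀ (e : ℕ → ℤ), (∑ j ∈ Finset.range (n+1), (e j : ℝ) * (2:ℝ)⁻¹ ^ (j+1)) =
        (e 0 : ℝ) * 2⁻¹ + ∑ j ∈ Finset.range n, (e (j+1) : ℝ) * (2:ℝ)⁻¹ ^ (j+2) := by
      intro e
      rw [Finset.sum_range_succ', add_comm]
      norm_num
    rw [split c, split d] at heq
    obtain ⟨bc1, bc0⟩ := bound c hc
    obtain ⟨bd1, bd0⟩ := bound d hd
    have hc0 : c 0 = d 0 := by
      by_contra hne
      rcases hc 0 with h1 | h1 <;> rcases hd 0 with h2 | h2 <;> rw [h1, h2] at heq <;>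
        push_cast at heq <;> first | omega | linarith
    rcases Nat.eq_zero_or_pos j with rfl | hjpos
    · exact hc0
    · have heq2 : (∑ i ∈ Finset.range n, ((c (i+1) : ℤ) : ℝ) * (2:ℝ)⁻¹ ^ (i+1)) =
          (∑ i ∈ Finset.range n, ((d (i+1) : ℤ) : ℝ) * (2:ℝ)⁻¹ ^ (i+1)) := by
        have hshift : (∑ j ∈ Finset.range n, (c (j+1) : ℝ) * (2:ℝ)⁻¹ ^ (j+2)) =
            (∑ j ∈ Finset.range n, (d (j+1) : ℝ) * (2:ℝ)⁻¹ ^ (j+2)) := by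
          rw [hc0] at heq; linarith
        have e1 : (∑ i ∈ Finset.range n, ((c (i+1)) : ℝ) * (2:ℝ)⁻¹ ^ (i+1)) =
            2 * ∑ j ∈ Finset.range n, (c (j+1) : ℝ) * (2:ℝ)⁻¹ ^ (j+2) := by
          rw [Finset.mul_sum]; apply Finset.sum_congr rfl; intro i _; ring
        have e2 : (∑ i ∈ Finset.range n, ((d (i+1)) : ℝ) * (2:ℝ)⁻¹ ^ (i+1)) =
            2 * ∑ j ∈ Finset.range n, (d (j+1) : ℝ) * (2:ℝ)⁻¹ ^ (j+2) := by
          rw [Finset.mul_sum]; apply Finset.sum_congr rfl; intro i _; ring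
        rw [e1, e2, hshift]
      have := ih (fun i => c (i+1)) (fun i => d (i+1)) (fun i => hc (i+1)) (fun i => hd (i+1))
        heq2 (j-1) (by omega)
      simpa [Nat.sub_add_cancel hjpos] using this

/-- `D n x` is determined by `⌈2^n x⌉`. -/
lemma D_eq_of_ceil_eq {x y : ℝ} (hx : x ∈ Set.Ioc (0:ℝ) 1) (hy : y ∈ Set.Ioc (0:ℝ) 1)
    (n : ℕ) (h : ⌈(2:ℝ)^n * x⌉ = ⌈(2:ℝ)^n * y⌉) : D n x = D n y := by
  -- 2^n * D n x is an integer, and ⌈2^n x⌉ = 2^n D n x + 1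
  have key : ∀ z : ℝ, z ∈ Set.Ioc (0:ℝ) 1 → (⌈(2:ℝ)^n * z⌉ : ℝ) = 2^n * D n z + 1 := by
    intro z hz
    have hmem := sub_D_mem hz n
    have hint : ∃ m : ℤ, (m : ℝ) = 2^n * D n z := by
      refine ⟨∑ j ∈ Finset.range n, eps (j+1) z * 2^(n-(j+1)), ?_⟩
      rw [D, Finset.mul_sum]
      push_cast
      apply Finset.sum_congr rfl
      intro i hi
      have hi' : i + 1 ≤ n := Finset.mem_range.mp hi
      rw [← zpow_natCast (2:ℝ) (n - (i+1)), ← zpow_natCast (2:ℝ) n]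
      have : ((n - (i+1) : ℕ) : ℤ) = (n : ℤ) - (i+1 : ℕ) := by omega
      rw [this]
      rw [zpow_sub₀ (by norm_num : (2:ℝ) ≠ 0)]
      have h2 : ((2:ℝ)⁻¹ ^ (i+1)) = ((2:ℝ) ^ ((i+1:ℕ):ℤ))⁻¹ := by
        rw [zpow_natCast, inv_pow]
      rw [h2]
      ring
    obtain ⟨m, hm⟩ := hint
    have h1 : 2^n * z - 2^n * D n z ∈ Set.Ioc (0:ℝ) 1 := by
      constructor
      · have := hmem.1; nlinarith [pow_pos (by norm_num : (0:ℝ) < 2) n]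
      · have := hmem.2
        have hpow : (2:ℝ)^n * (2:ℝ)⁻¹^n = 1 := by
          rw [← mul_pow]; norm_num
        nlinarith [pow_pos (by norm_num : (0:ℝ) < 2) n]
    have : ⌈(2:ℝ)^n * z⌉ = m + 1 := by
      rw [Int.ceil_eq_iff]
      rw [← hm] at h1
      constructor
      · push_cast; linarith [h1.1]
      · push_cast; linarith [h1.2]
    rw [this]; push_cast; rw [hm]
  have hx' := key x hx
  have hy' := key y hy
  rw [h] at hx'
  have : (2:ℝ)^n * D n x = 2^n * D n y := by linarith
  have hp : (0:ℝ) < 2^n := by positivity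
  exact mul_left_cancel₀ (ne_of_gt hp) this

lemma eps_eq_of_ceil_eq {x y : ℝ} (hx : x ∈ Set.Ioc (0:ℝ) 1) (hy : y ∈ Set.Ioc (0:ℝ) 1)
    (n : ℕ) (h : ⌈(2:ℝ)^n * x⌉ = ⌈(2:ℝ)^n * y⌉) : ∀ j < n, eps (j+1) x = eps (j+1) y := by
  have hD := D_eq_of_ceil_eq hx hy n h
  exact binary_unique n _ _ (eps_zero_or_one hx) (eps_zero_or_one hy) hD

/-- If the first `n` digits of `x` and `y` agree, both lie in the same dyadic interval. -/
lemma mem_D_Ioc {x : ℝ} (hx : x ∈ Set.Ioc (0:ℝ) 1) (n : ℕ) :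
    x ∈ Set.Ioc (D n x) (D n x + (2:ℝ)⁻¹ ^ n) := by
  have := sub_D_mem hx n
  exact ⟨by linarith [this.1], by linarith [this.2]⟩

/-- Zero run: if the first `m` digits of `y` are zero then `y ≤ 2^{-m}`. -/
lemma zero_run {y : ℝ} (hy : y ∈ Set.Ioc (0:ℝ) 1) :
    ∀ m : ℕ, (∀ i < m, ⌈2 * T^[i] y⌉ = 1) → y ≤ (2:ℝ)⁻¹ ^ m := by
  intro m
  induction m generalizing y with
  | zero => intro _; simpa using hy.2
  | succ m ih =>
    intro h
    have h0 : ⌈2 * y⌉ = 1 := by simpa using h 0 (by omega)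
    have hTy : T y = 2 * y := by
      simp only [T, h0]; push_cast; ring
    have hT : T y ∈ Set.Ioc (0:ℝ) 1 := T_mem_Ioc y
    have ih' := ih hT (fun i hi => by
      have := h (i+1) (by omega)
      rwa [Function.iterate_succ_apply] at this)
    rw [hTy] at ih'
    rw [pow_succ]
    nlinarith

/-! ### Constructing reals from digit sequences -/

noncomputable def valb (b : ℕ → ℝ) : ℝ := ∑' j, b j * (2:ℝ)⁻¹ ^ (j+1)

lemma summable_geom_half : Summable (fun j : ℕ => (2:ℝ)⁻¹ ^ (j+1)) := by
  have h2 : Summable (fun j : ℕ => (2:ℝ)⁻¹ ^ j) :=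
    summable_geometric_of_lt_one (by norm_num) (by norm_num)
  exact (h2.mul_left (2:ℝ)⁻¹).congr (fun j => by rw [pow_succ]; ring)

lemma valb_summable {b : ℕ → ℝ} (hb : ∀ j, b j = 0 ∨ b j = 1) :
    Summable (fun j => b j * (2:ℝ)⁻¹ ^ (j+1)) := by
  apply Summable.of_nonneg_of_le _ _ summable_geom_half
  · intro j
    rcases hb j with h | h <;> rw [h]
    · rw [zero_mul]
    · rw [one_mul]; positivity
  · intro j
    rcases hb j with h | h <;> rw [h]
    · rw [zero_mul]; positivity
    · rw [one_mul]

lemma tsum_geom_half : (∑' j : ℕ, (2:ℝ)⁻¹ ^ (j+1)) = 1 := by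
  have h : (fun j : ℕ => (2:ℝ)⁻¹ ^ (j+1)) = fun j => (2:ℝ)⁻¹ * (2:ℝ)⁻¹ ^ j := by
    funext j; rw [pow_succ]; ring
  rw [h, tsum_mul_left, tsum_geometric_of_lt_one (by norm_num) (by norm_num)]
  norm_num

lemma valb_mem {b : ℕ → ℝ} (hb : ∀ j, b j = 0 ∨ b j = 1)
    (hinf : ∀ N, ∃ j, N ≤ j ∧ b j = 1) : valb b ∈ Set.Ioc (0:ℝ) 1 := by
  have hs := valb_summable hb
  constructor
  · obtain ⟨j0, _, hj0⟩ := hinf 0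
    have hle : b j0 * (2:ℝ)⁻¹ ^ (j0+1) ≤ valb b := by
      apply Summable.le_tsum hs j0
      intro i _
      rcases hb i with h | h <;> rw [h]
      · rw [zero_mul]
      · rw [one_mul]; positivity
    rw [hj0, one_mul] at hle
    calc (0:ℝ) < (2:ℝ)⁻¹ ^ (j0+1) := by positivity
    _ ≤ valb b := hle
  · have h1 : valb b ≤ ∑' j : ℕ, (2:ℝ)⁻¹ ^ (j+1) := by
      apply Summable.tsum_le_tsum _ hs summable_geom_half
      intro j
      rcases hb j with h | h <;> rw [h]
      · rw [zero_mul]; positivity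
      · rw [one_mul]
    rw [tsum_geom_half] at h1
    exact h1

lemma shift_hyp {b : ℕ → ℝ} (hb : ∀ j, b j = 0 ∨ b j = 1)
    (hinf : ∀ N, ∃ j, N ≤ j ∧ b j = 1) (k : ℕ) :
    (∀ j, b (k + j) = 0 ∨ b (k + j) = 1) ∧ (∀ N, ∃ j, N ≤ j ∧ b (k + j) = 1) := by
  refine ⟨fun j => hb _, fun N => ?_⟩
  obtain ⟨j', hj', hb'⟩ := hinf (N + k)
  exact ⟨j' - k, by omega, by rw [show k + (j' - k) = j' by omega]; exact hb'⟩

lemma valb_split {b : ℕ → ℝ} (hb : ∀ j, b j = 0 ∨ b j = 1) :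
    valb b = b 0 * 2⁻¹ + 2⁻¹ * valb (fun j => b (1 + j)) := by
  have hs := valb_summable hb
  rw [valb, Summable.tsum_eq_zero_add hs]
  congr 1
  · norm_num
  · rw [valb, ← tsum_mul_left]
    apply tsum_congr
    intro j
    rw [show 1 + j = j + 1 by omega]
    rw [pow_succ]
    ring

lemma ceil_valb {b : ℕ → ℝ} (hb : ∀ j, b j = 0 ∨ b j = 1)
    (hinf : ∀ N, ∃ j, N ≤ j ∧ b j = 1) :
    ((⌈2 * valb b⌉ : ℝ) = b 0 + 1) ∧ T (valb b) = valb (fun j => b (1 + j)) := by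
  obtain ⟨hb', hinf'⟩ := shift_hyp hb hinf 1
  have hz : valb (fun j => b (1 + j)) ∈ Set.Ioc (0:ℝ) 1 := valb_mem hb' hinf'
  set z := valb (fun j => b (1 + j)) with hzdef
  have hsplit : 2 * valb b = b 0 + z := by
    rw [valb_split hb]; ring
  have hceil : (⌈2 * valb b⌉ : ℝ) = b 0 + 1 := by
    rw [hsplit]
    rcases hb 0 with h | h <;> rw [h]
    · norm_num
      have : ⌈z⌉ = 1 := by
        rw [Int.ceil_eq_iff] <;> push_cast <;> constructor <;> [linarith [hz.1]; exact hz.2]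
      exact_mod_cast this
    · have h1 : (1:ℝ) + z = z + (1:ℤ) := by push_cast; ring
      rw [h1, Int.ceil_add_intCast]
      have : ⌈z⌉ = 1 := by
        rw [Int.ceil_eq_iff] <;> push_cast <;> constructor <;> [linarith [hz.1]; exact hz.2]
      rw [this]; push_cast; ring
  refine ⟨hceil, ?_⟩
  simp only [T]
  rw [hceil, hsplit]
  ring

lemma iterate_valb {b : ℕ → ℝ} (hb : ∀ j, b j = 0 ∨ b j = 1)
    (hinf : ∀ N, ∃ j, N ≤ j ∧ b j = 1) :
    ∀ n, T^[n] (valb b) = valb (fun j => b (n + j)) := by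
  intro n
  induction n generalizing b with
  | zero => simp
  | succ n ih =>
    rw [Function.iterate_succ_apply, (ceil_valb hb hinf).2]
    obtain ⟨hb', hinf'⟩ := shift_hyp hb hinf 1
    rw [ih hb' hinf']
    congr 1
    funext j
    congr 1
    omega

lemma eps_valb {b : ℕ → ℝ} (hb : ∀ j, b j = 0 ∨ b j = 1)
    (hinf : ∀ N, ∃ j, N ≤ j ∧ b j = 1) (n : ℕ) :
    ((eps (n+1) (valb b) : ℤ) : ℝ) = b n := by
  obtain ⟨hb', hinf'⟩ := shift_hyp hb hinf n
  have := iterate_valb hb hinf n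
  simp only [eps, Nat.add_sub_cancel]
  rw [this]
  have hceil := (ceil_valb hb' hinf').1
  push_cast
  rw [hceil]
  simp

/-! ### Growth of Birkhoff sums -/

lemma phi_pos (x : ℝ) : 0 < phi x := by
  rw [phi]; exact zpow_pos (by norm_num) _

lemma phi_ge {y : ℝ} (m : ℕ) (hy : 0 < y) (h : y ≤ (2:ℝ)⁻¹ ^ m) : (2:ℝ)^m ≤ phi y := by
  have hinv : (2:ℝ)^m ≤ y⁻¹ := by
    have hrw : (2:ℝ)^m = ((2:ℝ)⁻¹^m)⁻¹ := by rw [inv_pow, inv_inv]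
    rw [hrw]
    exact inv_anti₀ hy h

  have hlog : (m : ℝ) ≤ Real.logb 2 y⁻¹ := by
    rw [Real.le_logb_iff_rpow_le (by norm_num) (by positivity)]
    rwa [Real.rpow_natCast]
  have hfloor : (m : ℤ) ≤ ⌊Real.logb 2 y⁻¹⌋ := Int.le_floor.mpr (by exact_mod_cast hlog)
  calc (2:ℝ)^m = (2:ℝ)^(m:ℤ) := by rw [zpow_natCast]
  _ ≤ (2:ℝ)^⌊Real.logb 2 y⁻¹⌋ := by
      apply zpow_le_zpow_right₀ (by norm_num) hfloor
  _ = phi y := rfl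

lemma exists_one_digit {x : ℝ} (hx : x ∈ Set.Ioc (0:ℝ) 1) (M : ℕ) :
    ∃ i, M ≤ i ∧ eps (i+1) x = 1 := by
  by_contra hcon
  push_neg at hcon
  have hzero : ∀ i, M ≤ i → eps (i+1) x = 0 := by
    intro i hi
    rcases eps_zero_or_one hx i with h | h
    · exact h
    · exact absurd h (hcon i hi)
  set y := T^[M] x with hydef
  have hy : y ∈ Set.Ioc (0:ℝ) 1 := T_iter_mem_Ioc hx M
  have hceil : ∀ i, ⌈2 * T^[i] y⌉ = 1 := by
    intro i
    have h := hzero (M + i) (by omega)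
    have hiter : T^[M + i] x = T^[i] y := by
      rw [hydef, ← Function.iterate_add_apply, add_comm]
    simp only [eps, Nat.add_sub_cancel] at h
    rw [hiter] at h
    omega
  obtain ⟨m, hm⟩ := exists_pow_lt_of_lt_one hy.1 (by norm_num : (2:ℝ)⁻¹ < 1)
  have := zero_run hy m (fun i _ => hceil i)
  linarith

lemma S_ge {x : ℝ} (hx : x ∈ Set.Ioc (0:ℝ) 1) {n a m : ℕ} (ha : a < n)
    (h : ∀ i < m, eps (a+1+i) x = 0) : (2:ℝ)^m ≤ S n x := by
  have hy : T^[a] x ∈ Set.Ioc (0:ℝ) 1 := T_iter_mem_Ioc hx a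
  have hceil : ∀ i < m, ⌈2 * T^[i] (T^[a] x)⌉ = 1 := by
    intro i hi
    have := h i hi
    simp only [eps, Nat.add_sub_cancel] at this
    rw [← Function.iterate_add_apply, add_comm]
    have harr : a + 1 + i - 1 = a + i := by omega
    rw [harr] at this
    omega
  have hz := zero_run hy m hceil
  have hphi : (2:ℝ)^m ≤ phi (T^[a] x) := phi_ge m hy.1 hz
  calc (2:ℝ)^m ≤ phi (T^[a] x) := hphi
  _ ≤ S n x := by
      apply Finset.single_le_sum (f := fun j => phi (T^[j] x))
      · intro i _; exact (phi_pos _).le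
      · exact Finset.mem_range.mpr ha

lemma real_growth (γ δ : ℝ) (hγ0 : 0 < γ) (hδ1 : γ < δ) :
    Tendsto (fun t : ℝ => ((t/2)^δ - 1 - t^γ)) atTop atTop := by
  have hbase : Tendsto (fun t : ℝ => t^γ - 1) atTop atTop :=
    (tendsto_rpow_atTop hγ0).atTop_add tendsto_const_nhds
  apply tendsto_atTop_mono' atTop _ hbase
  have h1 : ∀ᶠ t : ℝ in atTop, (2:ℝ)^(δ+1) ≤ t^(δ-γ) :=
    (tendsto_rpow_atTop (by linarith)).eventually_ge_atTop _
  filter_upwards [h1, eventually_ge_atTop (1:ℝ)] with t ht h1t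
  have ht0 : (0:ℝ) < t := by linarith
  have key : 2 * t^γ ≤ (t/2)^δ := by
    have e1 : (t/2)^δ = t^δ / (2:ℝ)^δ := Real.div_rpow (le_of_lt ht0) (by norm_num) δ
    have e2 : t^δ = t^γ * t^(δ-γ) := by
      rw [← Real.rpow_add ht0]; ring_nf
    have e3 : t^γ * (2:ℝ)^(δ+1) ≤ t^γ * t^(δ-γ) := by
      apply mul_le_mul_of_nonneg_left ht (Real.rpow_nonneg (le_of_lt ht0) γ)
    have e4 : (2:ℝ)^(δ+1) = 2 * (2:ℝ)^δ := by
      rw [Real.rpow_add (by norm_num), Real.rpow_one]; ring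
    rw [e1, e2]
    rw [e4] at e3
    have h2δ : (0:ℝ) < (2:ℝ)^δ := Real.rpow_pos_of_pos (by norm_num) δ
    rw [le_div_iff₀ h2δ]
    nlinarith
  have hγnn : (0:ℝ) ≤ t^γ := Real.rpow_nonneg (le_of_lt ht0) γ
  linarith

lemma rpow_two_tendsto {w : ℕ → ℝ} (hw : Tendsto w atTop atTop) :
    Tendsto (fun n => (2:ℝ)^(w n)) atTop atTop := by
  have h : ∀ n, (2:ℝ)^(w n) = Real.exp (Real.log 2 * w n) := by
    intro n
    rw [Real.rpow_def_of_pos (by norm_num)]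
  simp only [h]
  apply Real.tendsto_exp_atTop.comp
  exact hw.const_mul_atTop (Real.log_pos (by norm_num))

lemma growth (γ δ : ℝ) (hγ0 : 0 < γ) (hδ1 : γ < δ) (hδ0 : 0 < δ) (K : ℕ) (hK : 1 ≤ K) {x : ℝ}
    (hx : x ∈ Set.Ioc (0:ℝ) 1)
    (hxd : ∀ k : ℕ, K ≤ k → ∀ j : ℕ, 2 ^ k < j → j ≤ 2 ^ k + ⌊(2 : ℝ) ^ (δ * k)⌋₊ →
      eps j x = 0) :
    Tendsto (fun n : ℕ => S n x / (2:ℝ) ^ ((n : ℝ) ^ γ)) atTop atTop := by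
  set w : ℕ → ℝ := fun n => (((n:ℝ))/2)^δ - 1 - (n:ℝ)^γ with hwdef
  have hw : Tendsto w atTop atTop :=
    (real_growth γ δ hγ0 hδ1).comp tendsto_natCast_atTop_atTop
  apply tendsto_atTop_mono' atTop _ (rpow_two_tendsto hw)
  filter_upwards [eventually_ge_atTop (2^K + 1)] with n hn
  -- setup k
  set k := Nat.log 2 (n-1) with hkdef
  have hn1 : 1 ≤ n - 1 := by
    have : 2 ≤ 2^K := by calc 2 = 2^1 := by norm_num
                          _ ≤ 2^K := Nat.pow_le_pow_right (by norm_num) hK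
    omega
  have hk1 : 2^k ≤ n - 1 := Nat.pow_log_le_self 2 (by omega)
  have hk2 : n - 1 < 2^(k+1) := Nat.lt_pow_succ_log_self (by norm_num) _
  have hkK : K ≤ k := by
    rw [hkdef]
    apply Nat.le_log_of_pow_le (by norm_num)
    omega
  set m := ⌊(2 : ℝ) ^ (δ * k)⌋₊ with hmdef
  -- digit condition gives S bound
  have hdig : ∀ i < m, eps (2^k + 1 + i) x = 0 := by
    intro i hi
    exact hxd k hkK (2^k + 1 + i) (by omega) (by omega)
  have hS : (2:ℝ)^m ≤ S n x := S_ge hx (by omega) hdig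
  -- compare exponents
  have hexp : w n ≤ (m:ℝ) - (n:ℝ)^γ := by
    have hfloor : (2:ℝ)^(δ * k) - 1 < (m:ℝ) := by
      have := Nat.lt_floor_add_one ((2:ℝ)^(δ * k))
      rw [← hmdef] at this
      linarith
    have hnk : ((n:ℝ)/2) ≤ (2:ℝ)^(k:ℕ) := by
      have : (n:ℕ) ≤ 2^(k+1) := by omega
      have hcast : (n:ℝ) ≤ (2:ℝ)^(k+1) := by exact_mod_cast this
      rw [pow_succ] at hcast
      linarith
    have hpow : ((n:ℝ)/2)^δ ≤ (2:ℝ)^(δ * k) := by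
      have e1 : (2:ℝ)^(δ * (k:ℝ)) = ((2:ℝ)^((k:ℝ)))^δ := by
        rw [mul_comm, Real.rpow_mul (by norm_num)]
      have e2 : (2:ℝ)^((k:ℝ)) = (2:ℝ)^(k:ℕ) := Real.rpow_natCast 2 k
      rw [e1, e2]
      apply Real.rpow_le_rpow (by positivity) hnk (le_of_lt hδ0)
    simp only [hwdef]
    have : ((n:ℝ)/2)^δ - 1 ≤ (m:ℝ) := by linarith
    linarith
  -- final chain
  have hpos : (0:ℝ) < (2:ℝ)^((n:ℝ)^γ) := Real.rpow_pos_of_pos (by norm_num) _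
  calc (2:ℝ)^(w n) ≤ (2:ℝ)^((m:ℝ) - (n:ℝ)^γ) :=
        Real.rpow_le_rpow_of_exponent_le (by norm_num) hexp
  _ = (2:ℝ)^(m:ℕ) / (2:ℝ)^((n:ℝ)^γ) := by
      rw [Real.rpow_sub (by norm_num), Real.rpow_natCast]
  _ ≤ S n x / (2:ℝ)^((n:ℝ)^γ) := by
      exact div_le_div_of_nonneg_right hS (le_of_lt hpos) |>.trans_eq rfl

/-! ### Constrained and free digit positions -/

def Cons (δ : ℝ) (K : ℕ) (j : ℕ) : Prop :=
  ∃ k, K ≤ k ∧ 2^k < j ∧ j ≤ 2^k + ⌊(2:ℝ)^(δ*k)⌋₊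

def Fr (δ : ℝ) (K : ℕ) (j : ℕ) : Prop := ¬ Cons δ K (j+1)

lemma mk_lt_pow {δ : ℝ} (hδ2 : δ < 1) {l : ℕ} (hl : 1 ≤ l) : ⌊(2:ℝ)^(δ*l)⌋₊ < 2^l := by
  rw [Nat.floor_lt (by positivity)]
  have : δ * l < l := by
    have hl' : (0:ℝ) < l := by exact_mod_cast hl
    nlinarith
  calc (2:ℝ)^(δ*(l:ℝ)) < 2^((l:ℝ)) := Real.rpow_lt_rpow_of_exponent_lt (by norm_num) this
  _ = ((2^l : ℕ) : ℝ) := by rw [Real.rpow_natCast]; push_cast; ring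

lemma not_cons_pow {δ : ℝ} (hδ2 : δ < 1) {K : ℕ} (hK : 1 ≤ K) (k : ℕ) :
    ¬ Cons δ K (2^k) := by
  rintro ⟨l, hlK, hl1, hl2⟩
  have hlk : l < k := (Nat.pow_lt_pow_iff_right (by norm_num : 1 < 2)).mp hl1
  have hm : ⌊(2:ℝ)^(δ*l)⌋₊ < 2^l := mk_lt_pow hδ2 (le_trans hK hlK)
  have : 2^l + 2^l ≤ 2^k := by
    calc 2^l + 2^l = 2^(l+1) := by ring
    _ ≤ 2^k := Nat.pow_le_pow_right (by norm_num) (by omega)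
  omega

lemma Fr_infinite {δ : ℝ} (hδ2 : δ < 1) {K : ℕ} (hK : 1 ≤ K) :
    (setOf (Fr δ K)).Infinite := by
  apply Set.infinite_of_not_bddAbove
  rintro ⟨B, hB⟩
  have hmem : (2:ℕ)^(B+1) - 1 ∈ setOf (Fr δ K) := by
    show ¬ Cons δ K ((2:ℕ)^(B+1) - 1 + 1)
    have h2 : 1 ≤ (2:ℕ)^(B+1) := Nat.one_le_two_pow
    rw [show (2:ℕ)^(B+1) - 1 + 1 = 2^(B+1) by omega]
    exact not_cons_pow hδ2 hK (B+1)
  have := hB hmem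
  have h2 : B + 1 < 2^(B+1) := Nat.lt_two_pow_self
  omega

/-- Number of constrained positions among `1..p` is at most the sum of block lengths. -/
lemma ncon_le {δ : ℝ} {K : ℕ} (p : ℕ) (hp : 1 ≤ p) :
    ((Finset.range p).filter (fun j => ¬ Fr δ K j)).card ≤
      ∑ k ∈ Finset.range (Nat.log 2 p + 1), ⌊(2:ℝ)^(δ*k)⌋₊ := by
  classical
  have hsub : ∀ j ∈ (Finset.range p).filter (fun j => ¬ Fr δ K j),
      j + 1 ∈ (Finset.range (Nat.log 2 p + 1)).biUnion
        (fun k => Finset.Ioc (2^k) (2^k + ⌊(2:ℝ)^(δ*k)⌋₊)) := by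
    intro j hj
    rw [Finset.mem_filter, Finset.mem_range] at hj
    obtain ⟨hjp, hcons⟩ := hj
    rw [Fr, not_not] at hcons
    obtain ⟨k, hkK, hk1, hk2⟩ := hcons
    rw [Finset.mem_biUnion]
    refine ⟨k, ?_, Finset.mem_Ioc.mpr ⟨hk1, hk2⟩⟩
    rw [Finset.mem_range]
    have h2k : 2^k ≤ p := by omega
    have := Nat.le_log_of_pow_le (by norm_num) h2k
    omega
  calc ((Finset.range p).filter (fun j => ¬ Fr δ K j)).card
      ≤ ((Finset.range (Nat.log 2 p + 1)).biUnion
          (fun k => Finset.Ioc (2^k) (2^k + ⌊(2:ℝ)^(δ*k)⌋₊))).card := by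
        apply Finset.card_le_card_of_injOn (fun j => j + 1) hsub
        intro a _ b _ hab; simpa using hab
  _ ≤ ∑ k ∈ Finset.range (Nat.log 2 p + 1), (Finset.Ioc (2^k) (2^k + ⌊(2:ℝ)^(δ*k)⌋₊)).card :=
        Finset.card_biUnion_le
  _ = ∑ k ∈ Finset.range (Nat.log 2 p + 1), ⌊(2:ℝ)^(δ*k)⌋₊ := by
        apply Finset.sum_congr rfl
        intro k _
        rw [Nat.card_Ioc]
        omega

/-- Real bound: the number of constrained positions is `O(p^δ)`. -/
lemma ncon_real_le {δ : ℝ} (hδ0 : 0 < δ) {K : ℕ} (p : ℕ) (hp : 1 ≤ p) :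
    ((((Finset.range p).filter (fun j => ¬ Fr δ K j)).card : ℝ)) ≤
      (2:ℝ)^δ / ((2:ℝ)^δ - 1) * (p:ℝ)^δ := by
  have h2δ : (1:ℝ) < (2:ℝ)^δ := by
    calc (1:ℝ) = (2:ℝ)^(0:ℝ) := by rw [Real.rpow_zero]
    _ < (2:ℝ)^δ := Real.rpow_lt_rpow_of_exponent_lt (by norm_num) hδ0
  set L := Nat.log 2 p with hLdef
  have step1 : ((((Finset.range p).filter (fun j => ¬ Fr δ K j)).card : ℝ)) ≤
      ∑ k ∈ Finset.range (L + 1), (2:ℝ)^(δ*(k:ℝ)) := by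
    calc ((((Finset.range p).filter (fun j => ¬ Fr δ K j)).card : ℝ))
        ≤ ((∑ k ∈ Finset.range (L + 1), ⌊(2:ℝ)^(δ*(k:ℝ))⌋₊ : ℕ) : ℝ) := by
          exact_mod_cast ncon_le p hp
    _ ≤ ∑ k ∈ Finset.range (L + 1), (2:ℝ)^(δ*(k:ℝ)) := by
          push_cast
          apply Finset.sum_le_sum
          intro k _
          exact Nat.floor_le (by positivity)
  have step2 : ∑ k ∈ Finset.range (L + 1), (2:ℝ)^(δ*(k:ℝ)) ≤
      (2:ℝ)^δ / ((2:ℝ)^δ - 1) * ((2:ℝ)^δ)^L := by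
    have hgs : ∑ k ∈ Finset.range (L + 1), (2:ℝ)^(δ*(k:ℝ)) =
        ∑ k ∈ Finset.range (L + 1), ((2:ℝ)^δ)^k := by
      apply Finset.sum_congr rfl
      intro k _
      rw [← Real.rpow_natCast ((2:ℝ)^δ) k, ← Real.rpow_mul (by norm_num)]
    rw [hgs, geom_sum_eq (by linarith : (2:ℝ)^δ ≠ 1)]
    have hd : (0:ℝ) < (2:ℝ)^δ - 1 := by linarith
    rw [div_le_iff₀ hd]
    have hpowpos : (0:ℝ) < ((2:ℝ)^δ)^L := by positivity
    have heq : (2:ℝ)^δ/((2:ℝ)^δ-1) * ((2:ℝ)^δ)^L * ((2:ℝ)^δ - 1)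
        = (2:ℝ)^δ * ((2:ℝ)^δ)^L := by field_simp
    rw [heq]
    have : ((2:ℝ)^δ)^(L+1) = (2:ℝ)^δ * ((2:ℝ)^δ)^L := by ring
    linarith
  have step3 : ((2:ℝ)^δ)^L ≤ (p:ℝ)^δ := by
    have h2L : (2:ℕ)^L ≤ p := Nat.pow_log_le_self 2 (by omega)
    have h2L' : ((2:ℝ))^(L:ℕ) ≤ (p:ℝ) := by exact_mod_cast h2L
    calc ((2:ℝ)^δ)^L = ((2:ℝ)^(L:ℕ))^δ := by
          rw [← Real.rpow_natCast ((2:ℝ)^δ) L, ← Real.rpow_mul (by norm_num),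
            mul_comm, Real.rpow_mul (by norm_num), Real.rpow_natCast]
    _ ≤ (p:ℝ)^δ := Real.rpow_le_rpow (by positivity) h2L' (le_of_lt hδ0)
  have hC : (0:ℝ) < (2:ℝ)^δ / ((2:ℝ)^δ - 1) := by
    apply div_pos (by linarith) (by linarith)
  calc ((((Finset.range p).filter (fun j => ¬ Fr δ K j)).card : ℝ))
      ≤ ∑ k ∈ Finset.range (L + 1), (2:ℝ)^(δ*(k:ℝ)) := step1
  _ ≤ (2:ℝ)^δ / ((2:ℝ)^δ - 1) * ((2:ℝ)^δ)^L := step2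
  _ ≤ (2:ℝ)^δ / ((2:ℝ)^δ - 1) * (p:ℝ)^δ := by nlinarith

lemma count_Fr_eq {δ : ℝ} {K : ℕ} (p : ℕ) :
    Nat.count (Fr δ K) p + ((Finset.range p).filter (fun j => ¬ Fr δ K j)).card = p := by
  classical
  rw [Nat.count_eq_card_filter_range]
  have := Finset.card_filter_add_card_filter_not
    (s := Finset.range p) (p := fun j => Fr δ K j)
  simp only [Finset.card_range] at this
  convert this using 3

lemma real_lin_beats {δ : ℝ} (hδ0 : 0 < δ) (hδ2 : δ < 1) (C ε : ℝ) (hC : 0 < C) (hε : 0 < ε) :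
    Tendsto (fun t : ℝ => ε * t - C * t^δ - 2) atTop atTop := by
  have hbase : Tendsto (fun t : ℝ => ε/2 * t - 2) atTop atTop := by
    apply Tendsto.atTop_add _ tendsto_const_nhds
    exact tendsto_id.const_mul_atTop (by linarith)
  apply tendsto_atTop_mono' atTop _ hbase
  have h1 : ∀ᶠ t : ℝ in atTop, 2*C/ε ≤ t^(1-δ) :=
    (tendsto_rpow_atTop (by linarith)).eventually_ge_atTop _
  filter_upwards [h1, eventually_ge_atTop (1:ℝ)] with t ht h1t
  have ht0 : (0:ℝ) < t := by linarith
  have htδ : (0:ℝ) ≤ t^δ := Real.rpow_nonneg (le_of_lt ht0) δ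
  have key : C * t^δ ≤ ε/2 * t := by
    have e1 : t^(1-δ) * t^δ = t := by
      rw [← Real.rpow_add ht0, show (1:ℝ)-δ+δ = 1 by ring, Real.rpow_one]
    have e2 : (2*C/ε) * t^δ ≤ t^(1-δ) * t^δ := mul_le_mul_of_nonneg_right ht htδ
    rw [e1] at e2
    have : C * t^δ = (ε/2) * ((2*C/ε) * t^δ) := by field_simp
    rw [this]
    have := mul_le_mul_of_nonneg_left e2 (by linarith : (0:ℝ) ≤ ε/2)
    linarith
  linarith

/-- Eventually the count of free positions is large. -/
lemma count_large {δ : ℝ} (hδ0 : 0 < δ) (hδ2 : δ < 1) {K : ℕ} {α : ℝ}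
    (hα0 : 0 ≤ α) (hα1 : α < 1) :
    ∀ᶠ p : ℕ in atTop, α * ((p:ℝ)+1) + 1 ≤ (Nat.count (Fr δ K) p : ℝ) := by
  set C := (2:ℝ)^δ / ((2:ℝ)^δ - 1) with hCdef
  have h2δ : (1:ℝ) < (2:ℝ)^δ := by
    calc (1:ℝ) = (2:ℝ)^(0:ℝ) := by rw [Real.rpow_zero]
    _ < (2:ℝ)^δ := Real.rpow_lt_rpow_of_exponent_lt (by norm_num) hδ0
  have hC : 0 < C := div_pos (by linarith) (by linarith)
  have hten := real_lin_beats hδ0 hδ2 C (1-α) hC (by linarith)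
  have hev : ∀ᶠ t : ℝ in atTop, (0:ℝ) ≤ (1-α) * t - C * t^δ - 2 :=
    hten.eventually_ge_atTop 0
  have hevn : ∀ᶠ p : ℕ in atTop, (0:ℝ) ≤ (1-α) * (p:ℝ) - C * (p:ℝ)^δ - 2 :=
    tendsto_natCast_atTop_atTop.eventually hev
  filter_upwards [hevn, eventually_ge_atTop 1] with p hp hp1
  have hcnt := count_Fr_eq (δ := δ) (K := K) p
  have hncon := ncon_real_le (δ := δ) hδ0 (K := K) p hp1
  rw [← hCdef] at hncon
  have hcast : (Nat.count (Fr δ K) p : ℝ) =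
      (p:ℝ) - (((Finset.range p).filter (fun j => ¬ Fr δ K j)).card : ℝ) := by
    have : (Nat.count (Fr δ K) p : ℝ) +
        (((Finset.range p).filter (fun j => ¬ Fr δ K j)).card : ℝ) = (p:ℝ) := by
      exact_mod_cast hcnt
    linarith
  rw [hcast]
  linarith

/-- The count of free positions is unbounded. -/
lemma count_unbounded {δ : ℝ} (hδ2 : δ < 1) {K : ℕ} (hK : 1 ≤ K) (q : ℕ) :
    ∃ p, q ≤ Nat.count (Fr δ K) p := by
  classical
  have hinf := Fr_infinite hδ2 hK
  refine ⟨Nat.nth (Fr δ K) q + 1, ?_⟩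
  rw [Nat.count_succ]
  have h1 := Nat.count_nth_of_infinite hinf q
  have h2 := Nat.nth_mem_of_infinite hinf q
  simp [h1, h2]

/-! ### The insertion map `g` -/

noncomputable def bfun (δ : ℝ) (K : ℕ) (y : ℝ) (j : ℕ) : ℝ :=
  if Fr δ K j ∧ eps (Nat.count (Fr δ K) j + 1) y = 1 then 1 else 0

noncomputable def gmap (δ : ℝ) (K : ℕ) (y : ℝ) : ℝ := valb (bfun δ K y)

lemma bfun_01 (δ : ℝ) (K : ℕ) (y : ℝ) : ∀ j, bfun δ K y j = 0 ∨ bfun δ K y j = 1 := by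
  intro j
  rw [bfun]
  split <;> simp

lemma bfun_inf {δ : ℝ} (hδ2 : δ < 1) {K : ℕ} (hK : 1 ≤ K) {y : ℝ}
    (hy : y ∈ Set.Ioc (0:ℝ) 1) : ∀ N, ∃ j, N ≤ j ∧ bfun δ K y j = 1 := by
  intro N
  have hinf := Fr_infinite hδ2 hK
  obtain ⟨i, hiN, hi1⟩ := exists_one_digit hy N
  refine ⟨Nat.nth (Fr δ K) i, ?_, ?_⟩
  · calc N ≤ i := hiN
    _ ≤ Nat.nth (Fr δ K) i := (Nat.nth_strictMono hinf).le_apply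
  · rw [bfun, if_pos]
    refine ⟨Nat.nth_mem_of_infinite hinf i, ?_⟩
    rw [Nat.count_nth_of_infinite hinf i]
    exact hi1

lemma gmap_mem {δ : ℝ} (hδ2 : δ < 1) {K : ℕ} (hK : 1 ≤ K) {y : ℝ}
    (hy : y ∈ Set.Ioc (0:ℝ) 1) : gmap δ K y ∈ Set.Ioc (0:ℝ) 1 :=
  valb_mem (bfun_01 δ K y) (bfun_inf hδ2 hK hy)

lemma eps_gmap {δ : ℝ} (hδ2 : δ < 1) {K : ℕ} (hK : 1 ≤ K) {y : ℝ}
    (hy : y ∈ Set.Ioc (0:ℝ) 1) (j : ℕ) :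
    ((eps (j+1) (gmap δ K y) : ℤ) : ℝ) = bfun δ K y j :=
  eps_valb (bfun_01 δ K y) (bfun_inf hδ2 hK hy) j

/-- `gmap y` has zero digits at constrained positions. -/
lemma gmap_digits_zero {δ : ℝ} (hδ2 : δ < 1) {K : ℕ} (hK : 1 ≤ K) {y : ℝ}
    (hy : y ∈ Set.Ioc (0:ℝ) 1) :
    ∀ k : ℕ, K ≤ k → ∀ j : ℕ, 2 ^ k < j → j ≤ 2 ^ k + ⌊(2 : ℝ) ^ (δ * k)⌋₊ →
      eps j (gmap δ K y) = 0 := by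
  intro k hk j hj1 hj2
  have hj : 1 ≤ j := by have := Nat.one_le_two_pow (n := k); omega
  have hcons : Cons δ K j := ⟨k, hk, hj1, hj2⟩
  have hnF : ¬ Fr δ K (j-1) := by
    rw [Fr, not_not, show j - 1 + 1 = j by omega]
    exact hcons
  have := eps_gmap hδ2 hK hy (j-1)
  rw [show j - 1 + 1 = j by omega] at this
  rw [bfun, if_neg (by tauto)] at this
  exact_mod_cast this

/-- Recovering the digits of `y` from those of `gmap y`. -/
lemma eps_eq_of_bfun_eq {δ : ℝ} (hδ2 : δ < 1) {K : ℕ} (hK : 1 ≤ K) {y y' : ℝ}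
    (hy : y ∈ Set.Ioc (0:ℝ) 1) (hy' : y' ∈ Set.Ioc (0:ℝ) 1) (p : ℕ)
    (h : ∀ j < p, bfun δ K y j = bfun δ K y' j) :
    ∀ i < Nat.count (Fr δ K) p, eps (i+1) y = eps (i+1) y' := by
  intro i hi
  have hinf := Fr_infinite hδ2 hK
  set j := Nat.nth (Fr δ K) i with hjdef
  have hjp : j < p := Nat.nth_lt_of_lt_count hi
  have hFj : Fr δ K j := Nat.nth_mem_of_infinite hinf i
  have hcj : Nat.count (Fr δ K) j = i := Nat.count_nth_of_infinite hinf i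
  have hb := h j hjp
  rw [bfun, bfun, hcj] at hb
  rcases eps_zero_or_one hy i with h1 | h1 <;> rcases eps_zero_or_one hy' i with h2 | h2 <;>
    rw [h1, h2] <;> rw [h1, h2] at hb <;> simp [hFj] at hb ⊢

lemma T_measurable : Measurable T := by
  have h2x : Measurable (fun x : ℝ => 2 * x) := measurable_const.mul measurable_id
  have hceil : Measurable (fun x : ℝ => ((⌈2 * x⌉ : ℤ) : ℝ)) :=
    measurable_from_top.comp (h2x.ceil)
  exact ((h2x.sub hceil).add measurable_const)

lemma eps_measurable (n : ℕ) : Measurable (eps n) := by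
  have hit : Measurable (T^[n-1]) := T_measurable.iterate (n-1)
  have h2x : Measurable (fun x : ℝ => 2 * T^[n-1] x) := measurable_const.mul hit
  exact (h2x.ceil).sub measurable_const

lemma bfun_measurable (δ : ℝ) (K : ℕ) (j : ℕ) : Measurable (fun y => bfun δ K y j) := by
  by_cases hF : Fr δ K j
  · have : (fun y => bfun δ K y j) =
        fun y => if eps (Nat.count (Fr δ K) j + 1) y = 1 then (1:ℝ) else 0 := by
      funext y; rw [bfun]
      by_cases he : eps (Nat.count (Fr δ K) j + 1) y = 1 <;> simp [hF, he]
    rw [this]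
    have hset : MeasurableSet {y : ℝ | eps (Nat.count (Fr δ K) j + 1) y = 1} :=
      (eps_measurable _) (MeasurableSet.singleton 1)
    exact Measurable.ite hset measurable_const measurable_const
  · have : (fun y => bfun δ K y j) = fun _ => (0:ℝ) := by
      funext y; rw [bfun, if_neg (by tauto)]
    rw [this]; exact measurable_const

lemma gmap_measurable (δ : ℝ) (K : ℕ) : Measurable (gmap δ K) := by
  have hpart : ∀ n : ℕ, Measurable (fun y => ∑ j ∈ Finset.range n,
      bfun δ K y j * (2:ℝ)⁻¹ ^ (j+1)) := by
    intro n
    apply Finset.measurable_sum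
    intro j _
    exact (bfun_measurable δ K j).mul measurable_const
  apply measurable_of_tendsto_metrizable hpart
  rw [tendsto_pi_nhds]
  intro y
  exact ((valb_summable (bfun_01 δ K y)).hasSum).tendsto_sum_nat

/-! ### The push-forward measure and the mass distribution bound -/

noncomputable def mu (δ : ℝ) (K : ℕ) : Measure ℝ :=
  (volume.restrict (Set.Ioc (0:ℝ) 1)).map (gmap δ K)

lemma half_pow_ofReal (p : ℕ) : ENNReal.ofReal ((2:ℝ)⁻¹^p) = ((2:ℝ≥0∞)⁻¹)^p := by
  rw [ENNReal.ofReal_pow (by norm_num)]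
  congr 1
  rw [ENNReal.ofReal_inv_of_pos (by norm_num)]
  norm_num

lemma mu_bound {δ : ℝ} (hδ2 : δ < 1) {K : ℕ} (hK : 1 ≤ K) (p : ℕ) {s : Set ℝ} {z : ℝ}
    (hz : z ∈ s) (hd : EMetric.diam s ≤ ((2:ℝ≥0∞)⁻¹)^p) :
    mu δ K s ≤ 3 * ((2:ℝ≥0∞)⁻¹)^(Nat.count (Fr δ K) p) := by
  classical
  set J := Metric.closedBall z ((2:ℝ)⁻¹^p) with hJdef
  have hsJ : s ⊆ J := by
    intro w hw
    have h1 : edist w z ≤ EMetric.diam s := EMetric.edist_le_diam_of_mem hw hz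
    have h2 : edist w z ≤ ((2:ℝ≥0∞)⁻¹)^p := le_trans h1 hd
    rw [edist_dist, ← half_pow_ofReal] at h2
    rw [hJdef, Metric.mem_closedBall]
    exact (ENNReal.ofReal_le_ofReal_iff (by positivity)).mp h2
  set ν := Nat.count (Fr δ K) p with hνdef
  set A : ℤ → Set ℝ := fun c =>
    {y | y ∈ Set.Ioc (0:ℝ) 1 ∧ ⌈(2:ℝ)^p * gmap δ K y⌉ = ⌈(2:ℝ)^p * z⌉ + c} with hAdef
  have hcover : gmap δ K ⁻¹' J ∩ Set.Ioc (0:ℝ) 1 ⊆ ⋃ c ∈ Finset.Icc (-1:ℤ) 1, A c := by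
    rintro y ⟨hyJ, hyI⟩
    have hdist : |gmap δ K y - z| ≤ (2:ℝ)⁻¹^p := by
      rw [Set.mem_preimage, hJdef, Metric.mem_closedBall, Real.dist_eq] at hyJ
      exact hyJ
    have habs : |(2:ℝ)^p * gmap δ K y - 2^p * z| ≤ 1 := by
      have : (2:ℝ)^p * gmap δ K y - 2^p * z = 2^p * (gmap δ K y - z) := by ring
      rw [this, abs_mul, abs_of_pos (by positivity : (0:ℝ) < (2:ℝ)^p)]
      calc (2:ℝ)^p * |gmap δ K y - z| ≤ 2^p * (2:ℝ)⁻¹^p := by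
            apply mul_le_mul_of_nonneg_left hdist (by positivity)
      _ = 1 := by rw [← mul_pow]; norm_num
    have hup : ⌈(2:ℝ)^p * gmap δ K y⌉ ≤ ⌈(2:ℝ)^p * z⌉ + 1 := by
      have h1 : (2:ℝ)^p * gmap δ K y ≤ 2^p * z + 1 := by
        have := abs_le.mp habs; linarith [this.2]
      have := Int.ceil_le_ceil h1
      rwa [Int.ceil_add_one] at this
    have hdown : ⌈(2:ℝ)^p * z⌉ - 1 ≤ ⌈(2:ℝ)^p * gmap δ K y⌉ := by
      have h1 : (2:ℝ)^p * z ≤ 2^p * gmap δ K y + 1 := by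
        have := abs_le.mp habs; linarith [this.1]
      have := Int.ceil_le_ceil h1
      rw [Int.ceil_add_one] at this
      omega
    apply Set.mem_biUnion (show ⌈(2:ℝ)^p * gmap δ K y⌉ - ⌈(2:ℝ)^p * z⌉ ∈ Finset.Icc (-1:ℤ) 1 by
      rw [Finset.mem_Icc]; omega)
    exact ⟨hyI, by omega⟩
  have hAc : ∀ c : ℤ, volume (A c) ≤ ((2:ℝ≥0∞)⁻¹)^ν := by
    intro c
    rcases Set.eq_empty_or_nonempty (A c) with h | ⟨y0, hy0⟩
    · rw [h]; simp
    · have hsub : A c ⊆ Set.Ioc (D ν y0) (D ν y0 + (2:ℝ)⁻¹^ν) := by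
        rintro y ⟨hyI, hyc⟩
        have hceq : ⌈(2:ℝ)^p * gmap δ K y⌉ = ⌈(2:ℝ)^p * gmap δ K y0⌉ := by
          rw [hyc, hy0.2]
        have hgy := gmap_mem hδ2 hK hyI
        have hgy0 := gmap_mem hδ2 hK hy0.1
        have hepseq := eps_eq_of_ceil_eq hgy hgy0 p hceq
        have hbeq : ∀ j < p, bfun δ K y j = bfun δ K y0 j := by
          intro j hj
          rw [← eps_gmap hδ2 hK hyI j, ← eps_gmap hδ2 hK hy0.1 j, hepseq j hj]
        have hyd := eps_eq_of_bfun_eq hδ2 hK hyI hy0.1 p hbeq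
        have hD : D ν y = D ν y0 := by
          apply Finset.sum_congr rfl
          intro i hi
          rw [hyd i (Finset.mem_range.mp hi)]
        have := mem_D_Ioc hyI ν
        rwa [hD] at this
      calc volume (A c) ≤ volume (Set.Ioc (D ν y0) (D ν y0 + (2:ℝ)⁻¹^ν)) :=
            measure_mono hsub
      _ = ENNReal.ofReal ((2:ℝ)⁻¹^ν) := by rw [Real.volume_Ioc]; congr 1; ring
      _ = ((2:ℝ≥0∞)⁻¹)^ν := half_pow_ofReal ν
  calc mu δ K s ≤ mu δ K J := measure_mono hsJ
  _ = volume (gmap δ K ⁻¹' J ∩ Set.Ioc (0:ℝ) 1) := by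
      rw [mu, Measure.map_apply (gmap_measurable δ K) measurableSet_closedBall,
        Measure.restrict_apply ((gmap_measurable δ K) measurableSet_closedBall)]
  _ ≤ volume (⋃ c ∈ Finset.Icc (-1:ℤ) 1, A c) := measure_mono hcover
  _ ≤ ∑ c ∈ Finset.Icc (-1:ℤ) 1, volume (A c) := measure_biUnion_finset_le _ _
  _ ≤ ∑ _c ∈ Finset.Icc (-1:ℤ) 1, ((2:ℝ≥0∞)⁻¹)^ν := Finset.sum_le_sum (fun c _ => hAc c)
  _ = 3 * ((2:ℝ≥0∞)⁻¹)^ν := by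
      rw [Finset.sum_const]
      have : (Finset.Icc (-1:ℤ) 1).card = 3 := by rw [Int.card_Icc]; rfl
      rw [this]
      simp [mul_comm]

lemma half_lt_one : ((2:ℝ≥0∞)⁻¹) < 1 := by
  rw [ENNReal.inv_lt_one]
  norm_num

lemma mu_total {δ : ℝ} (hδ2 : δ < 1) {K : ℕ} (hK : 1 ≤ K) :
    1 ≤ mu δ K {x : ℝ | x ∈ Set.Ioc (0 : ℝ) 1 ∧ ∀ k : ℕ, K ≤ k → ∀ j : ℕ,
        2 ^ k < j → j ≤ 2 ^ k + ⌊(2 : ℝ) ^ (δ * k)⌋₊ → eps j x = 0} := by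
  set E := {x : ℝ | x ∈ Set.Ioc (0 : ℝ) 1 ∧ ∀ k : ℕ, K ≤ k → ∀ j : ℕ,
        2 ^ k < j → j ≤ 2 ^ k + ⌊(2 : ℝ) ^ (δ * k)⌋₊ → eps j x = 0} with hEdef
  have h1 : Set.Ioc (0:ℝ) 1 ⊆ gmap δ K ⁻¹' E := by
    intro y hy
    exact ⟨gmap_mem hδ2 hK hy, gmap_digits_zero hδ2 hK hy⟩
  calc (1:ℝ≥0∞) = volume.restrict (Set.Ioc (0:ℝ) 1) (Set.Ioc (0:ℝ) 1) := by
        rw [Measure.restrict_apply measurableSet_Ioc, Set.inter_self, Real.volume_Ioc]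
        rw [show (1:ℝ)-0 = 1 by ring, ENNReal.ofReal_one]
  _ ≤ volume.restrict (Set.Ioc (0:ℝ) 1) (gmap δ K ⁻¹' E) := measure_mono h1
  _ ≤ mu δ K E := Measure.le_map_apply (gmap_measurable δ K).aemeasurable E

lemma dimH_E_ge {δ : ℝ} (hδ0 : 0 < δ) (hδ2 : δ < 1) {K : ℕ} (hK : 1 ≤ K) :
    1 ≤ dimH {x : ℝ | x ∈ Set.Ioc (0 : ℝ) 1 ∧ ∀ k : ℕ, K ≤ k → ∀ j : ℕ,
        2 ^ k < j → j ≤ 2 ^ k + ⌊(2 : ℝ) ^ (δ * k)⌋₊ → eps j x = 0} := by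
  set E := {x : ℝ | x ∈ Set.Ioc (0 : ℝ) 1 ∧ ∀ k : ℕ, K ≤ k → ∀ j : ℕ,
        2 ^ k < j → j ≤ 2 ^ k + ⌊(2 : ℝ) ^ (δ * k)⌋₊ → eps j x = 0} with hEdef
  apply ENNReal.le_of_forall_nnreal_lt
  intro r hr
  rcases eq_or_lt_of_le (show 0 ≤ r from zero_le) with hr0 | hr0
  · rw [← hr0]; simp
  set α : ℝ := (r : ℝ) with hαdef
  have hα0 : 0 ≤ α := r.coe_nonneg
  have hα1 : α < 1 := by
    have hlt : r < 1 := ENNReal.coe_lt_one_iff.mp hr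
    exact_mod_cast hlt
  obtain ⟨P, hP⟩ := eventually_atTop.mp (count_large hδ0 hδ2 (K := K) hα0 hα1)
  set μ' : Measure ℝ := (2:ℝ≥0∞)⁻¹ • mu δ K with hμ'def
  -- the mass distribution estimate
  have hmain : ∀ s : Set ℝ, EMetric.diam s ≤ ((2:ℝ≥0∞)⁻¹)^P →
      μ' s ≤ (EMetric.diam s) ^ α := by
    intro s hs
    rcases Set.eq_empty_or_nonempty s with rfl | ⟨z, hz⟩
    · simp
    by_cases h0 : EMetric.diam s = 0
    · have hμ0 : mu δ K s = 0 := by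
        have hb : ∀ q : ℕ, mu δ K s ≤ 3 * ((2:ℝ≥0∞)⁻¹)^q := by
          intro q
          obtain ⟨p, hp⟩ := count_unbounded hδ2 hK q
          calc mu δ K s ≤ 3 * ((2:ℝ≥0∞)⁻¹)^(Nat.count (Fr δ K) p) :=
                mu_bound hδ2 hK p hz (by rw [h0]; exact zero_le)
          _ ≤ 3 * ((2:ℝ≥0∞)⁻¹)^q := by
                apply mul_le_mul_right
                exact pow_le_pow_right_of_le_one' (le_of_lt half_lt_one) hp
        have hlim : Tendsto (fun q : ℕ => 3 * ((2:ℝ≥0∞)⁻¹)^q) atTop (nhds 0) := by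
          have h1 := ENNReal.tendsto_pow_atTop_nhds_zero_of_lt_one half_lt_one
          have h2 := ENNReal.Tendsto.const_mul h1 (Or.inr (by norm_num : (3:ℝ≥0∞) ≠ ⊤))
          simpa using h2
        have := ge_of_tendsto' hlim hb
        exact le_antisymm this zero_le
      have : μ' s = 0 := by rw [hμ'def, Measure.smul_apply, hμ0]; simp
      rw [this]; exact zero_le
    -- positive diameter
    · set d := EMetric.diam s with hddef
      have hQex : ∃ q : ℕ, ((2:ℝ≥0∞)⁻¹)^q < d := by
        have h1 := ENNReal.tendsto_pow_atTop_nhds_zero_of_lt_one half_lt_one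
        exact (h1.eventually_lt_const (pos_iff_ne_zero.mpr h0)).exists
      set q0 := Nat.find hQex with hq0def
      have hq0 : ((2:ℝ≥0∞)⁻¹)^q0 < d := Nat.find_spec hQex
      have hq0pos : q0 ≠ 0 := by
        intro hq
        rw [hq, pow_zero] at hq0
        have hd1 : d ≤ 1 := le_trans hs (pow_le_one' (le_of_lt half_lt_one) P)
        exact absurd (lt_of_lt_of_le hq0 hd1) (lt_irrefl _)
      set p := q0 - 1 with hpdef
      have hp1 : d ≤ ((2:ℝ≥0∞)⁻¹)^p :=
        not_lt.mp (Nat.find_min hQex (show p < q0 by omega))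
      have hp2 : ((2:ℝ≥0∞)⁻¹)^(p+1) < d := by
        rw [show p+1 = q0 by omega]; exact hq0
      have hpP : P ≤ p := by
        by_contra hcon
        push_neg at hcon
        have h1 : ((2:ℝ≥0∞)⁻¹)^P ≤ ((2:ℝ≥0∞)⁻¹)^(p+1) :=
          pow_le_pow_right_of_le_one' (le_of_lt half_lt_one) (by omega)
        exact absurd (lt_of_lt_of_le hp2 (le_trans hs h1)) (lt_irrefl _)
      have hcount := hP p hpP
      set νn := Nat.count (Fr δ K) p with hνdef
      have hb := mu_bound hδ2 hK p hz hp1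
      -- ENNReal arithmetic
      have e1 : ((2:ℝ≥0∞)⁻¹)^νn = ((2:ℝ≥0∞)⁻¹)^((νn:ℝ)) := (ENNReal.rpow_natCast _ _).symm
      have e2 : ((2:ℝ≥0∞)⁻¹)^((νn:ℝ)) ≤ ((2:ℝ≥0∞)⁻¹)^(α*((p:ℝ)+1)+1) :=
        ENNReal.rpow_le_rpow_of_exponent_ge (le_of_lt half_lt_one) hcount
      have e3 : ((2:ℝ≥0∞)⁻¹)^(α*((p:ℝ)+1)+1) =
          2⁻¹ * (((2:ℝ≥0∞)⁻¹)^(((p:ℝ)+1)))^α := by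
        rw [ENNReal.rpow_add _ _ (by norm_num) (by norm_num), ENNReal.rpow_one,
          mul_comm α ((p:ℝ)+1), ENNReal.rpow_mul]
        ring
      have e4 : (((2:ℝ≥0∞)⁻¹)^(((p:ℝ)+1)))^α ≤ d^α := by
        apply ENNReal.rpow_le_rpow _ hα0
        have : ((2:ℝ≥0∞)⁻¹)^(((p:ℝ)+1)) = ((2:ℝ≥0∞)⁻¹)^(p+1 : ℕ) := by
          rw [← ENNReal.rpow_natCast]
          congr 1
          push_cast
          ring
        rw [this]
        exact le_of_lt hp2
      have hfinal : mu δ K s ≤ 3 * (2⁻¹ * d^α) := by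
        calc mu δ K s ≤ 3 * ((2:ℝ≥0∞)⁻¹)^νn := hb
        _ ≤ 3 * (2⁻¹ * d^α) := by
            apply mul_le_mul_right
            rw [e1]
            calc ((2:ℝ≥0∞)⁻¹)^((νn:ℝ)) ≤ ((2:ℝ≥0∞)⁻¹)^(α*((p:ℝ)+1)+1) := e2
            _ = 2⁻¹ * (((2:ℝ≥0∞)⁻¹)^(((p:ℝ)+1)))^α := e3
            _ ≤ 2⁻¹ * d^α := mul_le_mul_right e4 _
      rw [hμ'def, Measure.smul_apply, smul_eq_mul]
      calc (2:ℝ≥0∞)⁻¹ * mu δ K s ≤ 2⁻¹ * (3 * (2⁻¹ * d^α)) := mul_le_mul_right hfinal _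
      _ = (2⁻¹ * 3 * 2⁻¹) * d^α := by ring
      _ ≤ 1 * d^α := by
          apply mul_le_mul_left
          rw [show ((2:ℝ≥0∞)⁻¹ * 3 * 2⁻¹) = 3 * (2⁻¹ * 2⁻¹) by ring]
          rw [← ENNReal.mul_inv (Or.inl (by norm_num)) (Or.inl (by norm_num))]
          calc (3:ℝ≥0∞) * (2*2)⁻¹ ≤ (4:ℝ≥0∞) * (2*2)⁻¹ := by
                apply mul_le_mul_left
                norm_num
          _ = 1 := by
              rw [show ((2:ℝ≥0∞)*2) = 4 by norm_num]
              exact ENNReal.mul_inv_cancel (by norm_num) (by norm_num)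
      _ = d^α := one_mul _
  have hle := Measure.le_hausdorffMeasure α μ' (((2:ℝ≥0∞)⁻¹)^P)
    (ENNReal.pow_pos (ENNReal.inv_pos.mpr (by norm_num)) P) hmain
  apply le_dimH_of_hausdorffMeasure_ne_zero (d := r)
  have h1 : μ' E ≤ μH[α] E := hle E
  have h2 : (2:ℝ≥0∞)⁻¹ ≤ μ' E := by
    rw [hμ'def, Measure.smul_apply, smul_eq_mul]
    calc (2:ℝ≥0∞)⁻¹ = 2⁻¹ * 1 := by rw [mul_one]
    _ ≤ 2⁻¹ * mu δ K E := mul_le_mul_right (mu_total hδ2 hK) _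
  intro hcon
  rw [hcon] at h1
  have := le_antisymm (le_trans h2 h1) zero_le
  norm_num at this

theorem saint_petersburg_stmt14 (γ δ : ℝ) (hγ1 : 1 / 2 ≤ γ) (hγ2 : γ < 1)
    (hδ1 : γ < δ) (hδ2 : δ < 1) (K : ℕ) (hK : 1 ≤ K) :
    {x : ℝ | x ∈ Set.Ioc (0 : ℝ) 1 ∧ ∀ k : ℕ, K ≤ k → ∀ j : ℕ,
        2 ^ k < j → j ≤ 2 ^ k + ⌊(2 : ℝ) ^ (δ * k)⌋₊ → eps j x = 0} ⊆
      {x : ℝ | x ∈ Set.Ioc (0 : ℝ) 1 ∧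
        Filter.Tendsto (fun n : ℕ => S n x / (2 : ℝ) ^ ((n : ℝ) ^ γ))
          Filter.atTop Filter.atTop} ∧
    dimH {x : ℝ | x ∈ Set.Ioc (0 : ℝ) 1 ∧ ∀ k : ℕ, K ≤ k → ∀ j : ℕ,
        2 ^ k < j → j ≤ 2 ^ k + ⌊(2 : ℝ) ^ (δ * k)⌋₊ → eps j x = 0} = 1 ∧
    dimH {x : ℝ | x ∈ Set.Ioc (0 : ℝ) 1 ∧
        Filter.Tendsto (fun n : ℕ => S n x / (2 : ℝ) ^ ((n : ℝ) ^ γ))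
          Filter.atTop Filter.atTop} = 1 := by
  have hγ0 : 0 < γ := by linarith
  have hδ0 : 0 < δ := by linarith
  have hsub : {x : ℝ | x ∈ Set.Ioc (0 : ℝ) 1 ∧ ∀ k : ℕ, K ≤ k → ∀ j : ℕ,
        2 ^ k < j → j ≤ 2 ^ k + ⌊(2 : ℝ) ^ (δ * k)⌋₊ → eps j x = 0} ⊆
      {x : ℝ | x ∈ Set.Ioc (0 : ℝ) 1 ∧
        Filter.Tendsto (fun n : ℕ => S n x / (2 : ℝ) ^ ((n : ℝ) ^ γ))
          Filter.atTop Filter.atTop} := by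
    rintro x ⟨hx0, hxd⟩
    exact ⟨hx0, growth γ δ hγ0 hδ1 hδ0 K hK hx0 hxd⟩
  have hEdim : dimH {x : ℝ | x ∈ Set.Ioc (0 : ℝ) 1 ∧ ∀ k : ℕ, K ≤ k → ∀ j : ℕ,
        2 ^ k < j → j ≤ 2 ^ k + ⌊(2 : ℝ) ^ (δ * k)⌋₊ → eps j x = 0} = 1 := by
    apply le_antisymm
    · exact (dimH_mono (Set.subset_univ _)).trans_eq Real.dimH_univ
    · exact dimH_E_ge hδ0 hδ2 hK
  refine ⟨hsub, hEdim, le_antisymm ?_ ?_⟩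
  · exact (dimH_mono (Set.subset_univ _)).trans_eq Real.dimH_univ
  · calc (1:ℝ≥0∞) = dimH {x : ℝ | x ∈ Set.Ioc (0 : ℝ) 1 ∧ ∀ k : ℕ, K ≤ k → ∀ j : ℕ,
        2 ^ k < j → j ≤ 2 ^ k + ⌊(2 : ℝ) ^ (δ * k)⌋₊ → eps j x = 0} := hEdim.symm
    _ ≤ _ := dimH_mono hsub
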